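/- Let $A=[a_{i,j}]_{1\le i,j\le 2m}$ be a skew-symmetric matrix of even order over a commutative ring (i.e. $a_{j,i}=-a_{i,j}$ for all $i,j$) such that $a_{i,j}=0$ whenever $i+j$ is an even number greater than two. Then $\mathrm{per}(A)=(-1)^m\left(\mathrm{per}[a_{2i,2j-1}]_{1\le i,j\le m}\right)^2$. -/

import Mathlib

/-!
Listing the indices of `Fin (2 * m)` evens first, `A` becomes the block matrix `[[P, -Cᵀ], [C, 0]]`
with `C = [a_{2i,2j-1}]`: the lower right block collects the entries `a_{i,j}` with `i, j` both
even in the paper's `1`-based indexing, and skew-symmetry gives the upper right one. A permutation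
contributing to the permanent of `[[P, B], [C, 0]]` must send the second half onto the first, hence
the first onto the second, so that permanent is `per B * per C` whatever `P` is (this matters in
characteristic `2`, where `a_{1,1}` need not vanish). Finally `per (-C.transpose) = (-1)^m per C`.
-/

open Equiv Finset

namespace Matrix

variable {m n R : Type*} [DecidableEq m] [Fintype m] [DecidableEq n] [Fintype n]

theorem permanent_submatrix_equiv_self [CommSemiring R] (e : n ≃ m) (A : Matrix m m R) :
    (A.submatrix e e).permanent = A.permanent :=
  Fintype.sum_equiv (permCongr e) _ _ fun _ ↦ Fintype.prod_equiv e _ _ fun _ ↦ by simp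

theorem permanent_neg [CommRing R] (A : Matrix n n R) :
    (-A).permanent = (-1) ^ Fintype.card n * A.permanent := by
  rw [← permanent_smul, neg_one_smul]

theorem permanent_fromBlocks_zero₂₁ [CommSemiring R] (A : Matrix m m R) (B : Matrix m n R)
    (D : Matrix n n R) : (fromBlocks A B 0 D).permanent = A.permanent * D.permanent := by
  rw [permanent, permanent, permanent, sum_mul_sum, ← Fintype.sum_prod_type']
  refine (Fintype.sum_of_injective (Perm.sumCongrHom m n) Perm.sumCongrHom_injective _ _
    (fun σ hσ ↦ ?_) (fun p ↦ ?_)).symm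
  · obtain ⟨a, ha⟩ : ∃ a, σ (Sum.inl a) ∉ Set.range Sum.inl := by
      simpa [Set.MapsTo] using mt Perm.mem_sumCongrHom_range_of_perm_mapsTo_inl hσ
    obtain ⟨b, hb⟩ : ∃ b, σ (Sum.inl a) = Sum.inr b := by
      cases h : σ (Sum.inl a) with
      | inl a' => exact absurd ⟨a', h.symm⟩ ha
      | inr b => exact ⟨b, rfl⟩
    exact prod_eq_zero (mem_univ (Sum.inl a)) (by simp [hb])
  · simp [Fintype.prod_sum_type]

theorem permanent_fromBlocks_zero₂₂ [CommSemiring R] (A B C : Matrix n n R) :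
    (fromBlocks A B C 0).permanent = B.permanent * C.permanent := by
  rw [← permanent_permute_rows (sumComm n n), sumComm_apply, fromBlocks_submatrix_sum_swap_right,
    submatrix_id_id, permanent_fromBlocks_zero₂₁]

end Matrix

noncomputable def finSumFinEquivEvenOdd (m : ℕ) : Fin m ⊕ Fin m ≃ Fin (2 * m) :=
  Equiv.ofBijective (Sum.elim (fun k ↦ ⟨2 * k, by omega⟩) (fun k ↦ ⟨2 * k + 1, by omega⟩)) <|
    (Fintype.bijective_iff_injective_and_card _).mpr
      ⟨by rintro (a | a) (b | b) h <;> simp [Fin.ext_iff] at h ⊢ <;> omega, by simp; ring⟩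

@[simp]
theorem finSumFinEquivEvenOdd_inl_val {m : ℕ} (k : Fin m) :
    (finSumFinEquivEvenOdd m (Sum.inl k) : ℕ) = 2 * k := rfl

@[simp]
theorem finSumFinEquivEvenOdd_inr_val {m : ℕ} (k : Fin m) :
    (finSumFinEquivEvenOdd m (Sum.inr k) : ℕ) = 2 * k + 1 := rfl

/-- If `A = [a_{i,j}]_{1 ≤ i,j ≤ 2m}` (rows/columns indexed `1..2m`, realized as
`Fin (2m)` with `i` standing for the `(i+1)`-st row/column) is a skew-symmetric matrix over a
commutative ring with `a_{i,j} = 0` whenever `i + j` is an even number greater than two, then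
`per(A) = (-1)^m (per[a_{2i,2j-1}]_{1≤i,j≤m})^2`. -/
theorem stmt8 {R : Type*} [CommRing R] (m : ℕ)
    (A : Matrix (Fin (2 * m)) (Fin (2 * m)) R)
    (hskew : ∀ i j : Fin (2 * m), A j i = -A i j)
    (hA : ∀ i j : Fin (2 * m), Even (((i : ℕ) + 1) + ((j : ℕ) + 1)) →
      ((i : ℕ) + 1) + ((j : ℕ) + 1) > 2 → A i j = 0) :
    A.permanent =
      (-1) ^ m *
      (Matrix.of fun i j : Fin m =>
          A ⟨2 * (i : ℕ) + 1, by have := i.isLt; omega⟩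
            ⟨2 * (j : ℕ), by have := j.isLt; omega⟩).permanent ^ 2 := by
  set C : Matrix (Fin m) (Fin m) R := Matrix.of fun i j =>
    A ⟨2 * (i : ℕ) + 1, by omega⟩ ⟨2 * (j : ℕ), by omega⟩
  set e := finSumFinEquivEvenOdd m
  have hblocks : A.submatrix e e =
      Matrix.fromBlocks (A.submatrix (e ∘ Sum.inl) (e ∘ Sum.inl)) (-C.transpose) C 0 := by
    ext (i | i) (j | j)
    · rfl
    · exact hskew _ _
    · rfl
    · exact hA _ _ ⟨i + j + 2, by simp [e]; ring⟩ (by simp [e]; omega)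
  calc A.permanent = (A.submatrix e e).permanent := (A.permanent_submatrix_equiv_self e).symm
    _ = (-C.transpose).permanent * C.permanent := by rw [hblocks, Matrix.permanent_fromBlocks_zero₂₂]
    _ = (-1) ^ m * C.permanent ^ 2 := by
      rw [Matrix.permanent_neg, Matrix.permanent_transpose, Fintype.card_fin]; ring
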